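/- arXiv:1306.5168 — 3 statements merged into one kernel-verified Lean document; each statement's English description precedes it below -/
import Mathlib

section
/- Let 0 < r₀ < r and let U : ℝ → ℝ be twice continuously differentiable on [r₀², r²]. Set σ(x) = x U''(x) + U'(x), t₀ = r² U'(r²), and u₀ = r₀² log(r₀²) U'(r₀²) − U(r₀²). Then 2 [ ∫_{r₀²}^{r²} ( x U'(x) log x − U(x) ) σ(x) dx − ( t₀ − r₀² U'(r₀²) ) u₀ ] = ∫_{r₀²}^{r²} x (U'(x))² dx + t₀² log(r²) − 2 t₀ U(r²) − 2 u₀ t₀ + r₀⁴ (U'(r₀²))² log(r₀²). -/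
/-!
Write `w = x U'(x)`, so that `σ = w'`. Since
`(w log x - U) w' = (w² log x / 2 - U w)' + x U'(x)² / 2`,
integrating over `[r₀², r²]` turns the left-hand side into the integral of `x U'²` plus boundary
terms, and the boundary terms at `r₀²` collapse with `(t₀ - r₀² U'(r₀²)) u₀` to
`r₀⁴ U'(r₀²)² log r₀²`.
-/

open Real Set

theorem hasDerivAt_derivWithin_Icc {g : ℝ → ℝ} {a b x : ℝ}
    (hg : DifferentiableOn ℝ g (Icc a b)) (hx : x ∈ Ioo a b) :
    HasDerivAt g (derivWithin g (Icc a b) x) x :=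
  (hg x (Ioo_subset_Icc_self hx)).hasDerivWithinAt.hasDerivAt (Icc_mem_nhds hx.1 hx.2)

noncomputable def tauBoundaryTerm (U f : ℝ → ℝ) (x : ℝ) : ℝ :=
  (x * f x) ^ 2 * log x - 2 * U x * (x * f x)

theorem hasDerivAt_tauBoundaryTerm {U f : ℝ → ℝ} {f' x : ℝ} (hU : HasDerivAt U (f x) x)
    (hf : HasDerivAt f f' x) (hx : x ≠ 0) :
    HasDerivAt (tauBoundaryTerm U f)
      (2 * ((x * f x * log x - U x) * (x * f' + f x)) - x * f x ^ 2) x := by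
  have hw : HasDerivAt (fun y => y * f y) (1 * f x + x * f') x := (hasDerivAt_id x).mul hf
  refine (((hw.pow 2).mul (hasDerivAt_log hx)).sub
    (((hasDerivAt_const x (2 : ℝ)).mul hU).mul hw)).congr_deriv ?_
  simp only [Pi.mul_apply, Pi.pow_apply]
  field_simp
  ring

theorem two_mul_integral_tau_eq {U f f' : ℝ → ℝ} {a b : ℝ} (ha : 0 < a) (hab : a ≤ b)
    (hUc : ContinuousOn U (Icc a b)) (hfc : ContinuousOn f (Icc a b))
    (hf'c : ContinuousOn f' (Icc a b))
    (hU : ∀ x ∈ Ioo a b, HasDerivAt U (f x) x) (hf : ∀ x ∈ Ioo a b, HasDerivAt f (f' x) x) :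
    2 * ∫ x in a..b, (x * f x * log x - U x) * (x * f' x + f x) =
      (∫ x in a..b, x * f x ^ 2) + tauBoundaryTerm U f b - tauBoundaryTerm U f a := by
  have hlog : ContinuousOn log (Icc a b) :=
    continuousOn_log.mono fun x hx => (ha.trans_le hx.1).ne'
  have hw : ContinuousOn (fun x => x * f x) (Icc a b) := continuousOn_id.mul hfc
  have hmain : IntervalIntegrable (fun x => (x * f x * log x - U x) * (x * f' x + f x))
      MeasureTheory.volume a b :=
    (((hw.mul hlog).sub hUc).mul ((continuousOn_id.mul hf'c).add hfc)).intervalIntegrable_of_Icc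
      hab
  have hsq : IntervalIntegrable (fun x => x * f x ^ 2) MeasureTheory.volume a b :=
    (continuousOn_id.mul (hfc.pow 2)).intervalIntegrable_of_Icc hab
  have hB : ContinuousOn (tauBoundaryTerm U f) (Icc a b) :=
    ((hw.pow 2).mul hlog).sub ((continuousOn_const.mul hUc).mul hw)
  have hftc := intervalIntegral.integral_eq_sub_of_hasDerivAt_of_le hab hB
    (fun x hx => hasDerivAt_tauBoundaryTerm (hU x hx) (hf x hx) (ha.trans hx.1).ne')
    ((hmain.const_mul 2).sub hsq)
  rw [intervalIntegral.integral_sub (hmain.const_mul 2) hsq,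
    intervalIntegral.integral_const_mul] at hftc
  linarith

/-- Equivalence of the two integral formulas for (twice) the restricted
tau-function `F(t₀)` of a radially symmetric background:
`2[∫_{r₀²}^{r²} (x U'(x) log x − U(x)) σ(x) dx − (t₀ − r₀² U'(r₀²)) u₀]
 = ∫_{r₀²}^{r²} x (U'(x))² dx + t₀² log(r²) − 2 t₀ U(r²) − 2 u₀ t₀
   + r₀⁴ (U'(r₀²))² log(r₀²)`. -/
theorem tau_two_formulas_equivalent (r₀ r : ℝ) (h₀ : 0 < r₀) (hr : r₀ < r)
    (U : ℝ → ℝ) (I : Set ℝ) (hI : I = Set.Icc (r₀ ^ 2) (r ^ 2))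
    (hU : ContDiffOn ℝ 2 U I)
    (σ : ℝ → ℝ)
    (hσ : ∀ x ∈ I, σ x = x * derivWithin (derivWithin U I) I x + derivWithin U I x)
    (t₀ u₀ : ℝ)
    (ht₀ : t₀ = r ^ 2 * derivWithin U I (r ^ 2))
    (hu₀ : u₀ = r₀ ^ 2 * Real.log (r₀ ^ 2) * derivWithin U I (r₀ ^ 2) - U (r₀ ^ 2)) :
    2 * ((∫ x in (r₀ ^ 2)..(r ^ 2), (x * derivWithin U I x * Real.log x - U x) * σ x) -
        (t₀ - r₀ ^ 2 * derivWithin U I (r₀ ^ 2)) * u₀) =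
      (∫ x in (r₀ ^ 2)..(r ^ 2), x * (derivWithin U I x) ^ 2) +
        t₀ ^ 2 * Real.log (r ^ 2) - 2 * t₀ * U (r ^ 2) - 2 * u₀ * t₀ +
        r₀ ^ 4 * (derivWithin U I (r₀ ^ 2)) ^ 2 * Real.log (r₀ ^ 2) := by
  subst hI ht₀ hu₀
  have hab : r₀ ^ 2 < r ^ 2 := by gcongr
  set I := Icc (r₀ ^ 2) (r ^ 2)
  set f := derivWithin U I
  have hI : UniqueDiffOn ℝ I := uniqueDiffOn_Icc hab
  have hf : ContDiffOn ℝ 1 f I := hU.derivWithin hI le_rfl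
  have hσ_int : (∫ x in (r₀ ^ 2)..(r ^ 2), (x * f x * log x - U x) * σ x) =
      ∫ x in (r₀ ^ 2)..(r ^ 2), (x * f x * log x - U x) * (x * derivWithin f I x + f x) :=
    intervalIntegral.integral_congr fun x hx => by
      rw [uIcc_of_le hab.le] at hx
      rw [hσ x hx]
  have key := two_mul_integral_tau_eq (by positivity) hab.le hU.continuousOn hf.continuousOn
    (hf.continuousOn_derivWithin hI le_rfl)
    (fun x hx => hasDerivAt_derivWithin_Icc (hU.differentiableOn two_ne_zero) hx)
    (fun x hx => hasDerivAt_derivWithin_Icc (hf.differentiableOn one_ne_zero) hx)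
  rw [hσ_int]
  unfold tauBoundaryTerm at key
  linear_combination key
end

section
/- Let N ≥ 2 and let τ₂, …, τ_N be real parameters. Suppose u : Ω → ℝ is a differentiable function on an open set Ω ⊂ ℝ × ℝ^{N−1} of points (t₀, τ₂, …, τ_N) satisfying the implicit equation t₀ = Σ_{k=2}^{N} k τ_k u(t₀, τ)^{k−1} on Ω, and suppose Σ_{k=2}^{N} k(k−1) τ_k u^{k−2} ≠ 0 on Ω. Then u satisfies the dispersionless KdV hierarchy: for every j with 2 ≤ j ≤ N, ∂u/∂τ_j + j u^{j−1} ∂u/∂t₀ = 0 on Ω. -/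
/-!
Differentiating the hodograph relation `t₀ = 𝒰'(u)` along a direction `(s, w)` gives
`s = 𝒰''(u) · du(s, w) + ∂_τ𝒰'(u) · w`. Taking `(1, 0)` yields `u_{t₀} = 1 / 𝒰''(u)`, taking `(0, e_j)`
yields `u_{τ_j} = -j u^{j-1} / 𝒰''(u)`, and the two combine to the flow `u_{τ_j} + j u^{j-1} u_{t₀} = 0`.
-/

open Filter Topology ContinuousLinearMap

section ImplicitRelation

variable {E : Type*} [NormedAddCommGroup E] [NormedSpace ℝ E]

lemma ContinuousLinearMap.apply_mk_eq_add_mul (G' : E × ℝ →L[ℝ] ℝ) (w : E) (y : ℝ) :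
    G' (w, y) = G' (w, 0) + y * G' (0, 1) := by
  rw [← smul_eq_mul, ← map_smul, ← map_add]
  simp

theorem fderiv_add_mul_fderiv_eq_zero_of_eventually_fst_eq {G : E × ℝ → ℝ}
    {G' : E × ℝ →L[ℝ] ℝ} {u : ℝ × E → ℝ} {p : ℝ × E} (hu : DifferentiableAt ℝ u p)
    (hG : HasFDerivAt G G' (p.2, u p)) (himp : ∀ᶠ q in 𝓝 p, q.1 = G (q.2, u q))
    (hnd : G' (0, 1) ≠ 0) (w : E) :
    fderiv ℝ u p (0, w) + G' (w, 0) * fderiv ℝ u p (1, 0) = 0 := by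
  set du := fderiv ℝ u p
  have hcomp : HasFDerivAt (fun q : ℝ × E => G (q.2, u q)) (G'.comp ((snd ℝ ℝ E).prod du)) p :=
    hG.comp p (hasFDerivAt_snd.prodMk hu.hasFDerivAt)
  have hlin : fst ℝ ℝ E = G'.comp ((snd ℝ ℝ E).prod du) :=
    hasFDerivAt_fst.unique (hcomp.congr_of_eventuallyEq himp)
  have hdiff (v : ℝ × E) : v.1 = G' (v.2, 0) + du v * G' (0, 1) := by
    simpa [← G'.apply_mk_eq_add_mul] using congrArg (· v) hlin
  have h₁ := hdiff (1, 0)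
  have h₂ := hdiff (0, w)
  simp only [Prod.mk_zero_zero, map_zero, zero_add] at h₁ h₂
  apply mul_left_cancel₀ hnd
  linear_combination -h₂ - G' (w, 0) * h₁

end ImplicitRelation

section Potential

variable {n : ℕ}

/-- `potentialDeriv τ X = 𝒰'(X)` for `𝒰(X) = ∑ τ_k X^k`, indexed by `τ i = τ_{i+2}`. -/
def potentialDeriv (τ : Fin n → ℝ) (X : ℝ) : ℝ :=
  ∑ i : Fin n, ((i : ℕ) + 2 : ℝ) * τ i * X ^ ((i : ℕ) + 1)

def potentialDerivFDeriv (τ : Fin n → ℝ) (X : ℝ) : (Fin n → ℝ) × ℝ →L[ℝ] ℝ :=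
  ∑ i : Fin n, ((i : ℕ) + 2 : ℝ) •
    ((X ^ ((i : ℕ) + 1)) • (proj i).comp (fst ℝ (Fin n → ℝ) ℝ) +
      (τ i * ((i : ℕ) + 1 : ℝ) * X ^ (i : ℕ)) • snd ℝ (Fin n → ℝ) ℝ)

lemma hasFDerivAt_potentialDeriv (τ : Fin n → ℝ) (X : ℝ) :
    HasFDerivAt (fun x : (Fin n → ℝ) × ℝ => potentialDeriv x.1 x.2)
      (potentialDerivFDeriv τ X) (τ, X) := by
  unfold potentialDeriv potentialDerivFDeriv
  refine HasFDerivAt.fun_sum fun i _ => ?_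
  have hτ : HasFDerivAt (fun x : (Fin n → ℝ) × ℝ => x.1 i)
      ((proj i).comp (fst ℝ (Fin n → ℝ) ℝ)) (τ, X) :=
    ((proj i).comp (fst ℝ (Fin n → ℝ) ℝ)).hasFDerivAt
  have hX : HasFDerivAt (fun x : (Fin n → ℝ) × ℝ => x.2 ^ ((i : ℕ) + 1))
      ((((i : ℕ) + 1 : ℝ) * X ^ (i : ℕ)) • snd ℝ _ ℝ) (τ, X) := by
    simpa [Function.comp_def] using
      (hasDerivAt_pow ((i : ℕ) + 1) X).comp_hasFDerivAt (τ, X) (snd ℝ (Fin n → ℝ) ℝ).hasFDerivAt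
  refine (((hτ.fun_mul hX).const_mul ((i : ℕ) + 2 : ℝ)).congr_fderiv ?_).congr_of_eventuallyEq
    (.of_eq (funext fun x => mul_assoc _ _ _))
  ext <;> simp [mul_assoc]

lemma potentialDerivFDeriv_apply_zero_one (τ : Fin n → ℝ) (X : ℝ) :
    potentialDerivFDeriv τ X (0, 1) =
      ∑ i : Fin n, ((i : ℕ) + 2 : ℝ) * ((i : ℕ) + 1 : ℝ) * τ i * X ^ (i : ℕ) := by
  simp only [potentialDerivFDeriv, smul_add, sum_apply, add_apply, smul_apply, comp_apply, coe_fst',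
    proj_apply, Pi.zero_apply, smul_eq_mul, mul_zero, coe_snd', mul_one, zero_add]
  exact Finset.sum_congr rfl fun i _ => by ring

lemma potentialDerivFDeriv_apply_single_zero (τ : Fin n → ℝ) (X : ℝ) (j : Fin n) :
    potentialDerivFDeriv τ X (Pi.single j 1, 0) = ((j : ℕ) + 2 : ℝ) * X ^ ((j : ℕ) + 1) := by
  simp [potentialDerivFDeriv, Pi.single_apply, mul_comm]

end Potential

theorem dispersionless_KdV_hierarchy_general (N : ℕ)
    (Ω : Set (ℝ × (Fin (N - 1) → ℝ))) (hΩ : IsOpen Ω)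
    (u : ℝ × (Fin (N - 1) → ℝ) → ℝ) (hu : DifferentiableOn ℝ u Ω)
    (himp : ∀ p ∈ Ω,
      p.1 = ∑ i : Fin (N - 1), ((i : ℕ) + 2 : ℝ) * p.2 i * u p ^ ((i : ℕ) + 1))
    (hnd : ∀ p ∈ Ω,
      (∑ i : Fin (N - 1), ((i : ℕ) + 2 : ℝ) * ((i : ℕ) + 1 : ℝ) * p.2 i * u p ^ (i : ℕ)) ≠ 0) :
    ∀ p ∈ Ω, ∀ i : Fin (N - 1),
      fderiv ℝ u p (0, Pi.single i 1) +
        ((i : ℕ) + 2 : ℝ) * u p ^ ((i : ℕ) + 1) * fderiv ℝ u p (1, 0) = 0 := by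
  intro p hp j
  have hflow := fderiv_add_mul_fderiv_eq_zero_of_eventually_fst_eq
    ((hu p hp).differentiableAt (hΩ.mem_nhds hp)) (hasFDerivAt_potentialDeriv p.2 (u p))
    (eventually_of_mem (hΩ.mem_nhds hp) himp)
    (by simpa only [potentialDerivFDeriv_apply_zero_one] using hnd p hp) (Pi.single j 1)
  rwa [potentialDerivFDeriv_apply_single_zero] at hflow

/-- If `u(t₀, τ₂, …, τ_N)` is differentiable on an open set `Ω` and
satisfies the implicit equation `t₀ = Σ_{k=2}^N k τ_k u^{k−1}` with nondegeneracy
`Σ_{k=2}^N k(k−1) τ_k u^{k−2} ≠ 0`, then `u` solves the dispersionless KdV hierarchy: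
`∂u/∂τ_j + j u^{j−1} ∂u/∂t₀ = 0` for `2 ≤ j ≤ N`.
Here a point of `ℝ × (Fin (N−1) → ℝ)` is `(t₀, τ)` with `τ i = τ_{i+2}`. -/
theorem dispersionless_KdV_hierarchy (N : ℕ) (hN : 2 ≤ N)
    (Ω : Set (ℝ × (Fin (N - 1) → ℝ))) (hΩ : IsOpen Ω)
    (u : ℝ × (Fin (N - 1) → ℝ) → ℝ) (hu : DifferentiableOn ℝ u Ω)
    (himp : ∀ p ∈ Ω,
      p.1 = ∑ i : Fin (N - 1), ((i : ℕ) + 2 : ℝ) * p.2 i * u p ^ ((i : ℕ) + 1))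
    (hnd : ∀ p ∈ Ω,
      (∑ i : Fin (N - 1), ((i : ℕ) + 2 : ℝ) * ((i : ℕ) + 1 : ℝ) * p.2 i * u p ^ (i : ℕ)) ≠ 0) :
    ∀ p ∈ Ω, ∀ i : Fin (N - 1),
      fderiv ℝ u p (0, Pi.single i 1) +
        ((i : ℕ) + 2 : ℝ) * u p ^ ((i : ℕ) + 1) * fderiv ℝ u p (1, 0) = 0 :=
  dispersionless_KdV_hierarchy_general N Ω hΩ u hu himp hnd
end

section
/- Let k > 2 be an integer, C₁ > 0, 0 < r₀ < r, and set R_k = (k−1) C₁^{k−1}, a_k = (1/k) (k−2)^{k−2} / (k−1)^{k−1}, and U_k(x) = ( R_k/(k−1) )^{1/(k−2)} ( log(x/r₀²) )^{(k−1)/(k−2)} for x ≥ r₀². Then U_k(r₀²) = 0, U_k'(x) → 0 as x → r₀²⁺ (so u₀ = 0), and with σ(x) = x U_k''(x) + U_k'(x) and t₀ = r² U_k'(r²), one has ∫_{r₀²}^{r²} ( x U_k'(x) log x − U_k(x) ) σ(x) dx = ( (k−1) a_k / R_k ) t₀^k + (t₀²/2) log(r₀²). Moreover the second derivative of the right-hand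 side in t₀ equals log(r²). -/
/-!
Write `L = log (x / r₀²)`, `p = (k - 1) / (k - 2)` and `A = (R_k / (k - 1)) ^ (1 / (k - 2))`, so that
`U = A L ^ p`. The moment `T(x) = x U'(x) = A p L ^ (p - 1)` vanishes at `r₀²`, is increasing, and
`T ^ (k - 2)` is proportional to `L` because `(p - 1) (k - 2) = 1`. The value of `a_k` is exactly the
normalisation for which `P(t) = α t ^ k + t² / 2 · log r₀²`, with `α = (k - 1) a_k / R_k`, satisfies
`P''(T(x)) = log x`; it follows that `x U' log x - U = P'(T(x))`. Since `σ = (x U')' = T'`, the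
integrand is `P'(T) T'`, and the substitution `t = T(x)` turns the integral into `P(t₀) - P(0)`.
-/

open Real Set Filter Topology intervalIntegral

section LogPower

variable {a q x : ℝ}

lemma hasDerivAt_rpow_log_div (ha : 0 < a) (hx : a < x) (q : ℝ) :
    HasDerivAt (fun y => log (y / a) ^ q) (q * log (x / a) ^ (q - 1) / x) x := by
  have hlog := ((hasDerivAt_id' x).div_const a).log (div_pos (ha.trans hx) ha).ne'
  convert hlog.rpow_const (p := q) (Or.inl (log_pos ((one_lt_div ha).2 hx)).ne') using 1
  field_simp

lemma continuousOn_rpow_log_div (ha : a ≠ 0) (hq : 0 ≤ q) :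
    ContinuousOn (fun y => log (y / a) ^ q) (Ioi 0) :=
  ((continuousOn_id.div_const a).log fun _ hy => div_ne_zero (ne_of_gt hy) ha).rpow_const
    fun _ _ => Or.inr hq

end LogPower

lemma rpow_one_div_sub_two_pow {y : ℝ} {k : ℕ} (hy : 0 ≤ y) (hk : 2 < k) :
    (y ^ (1 / ((k : ℝ) - 2))) ^ (k - 2) = y := by
  rw [one_div, ← Nat.cast_ofNat, ← Nat.cast_sub hk.le, rpow_inv_natCast_pow hy (by omega)]

lemma mul_deriv_deriv_add_deriv {f : ℝ → ℝ} {x : ℝ} (hf : DifferentiableAt ℝ (deriv f) x) :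
    x * deriv (deriv f) x + deriv f x = deriv (fun y => y * deriv f y) x := by
  rw [deriv_fun_mul differentiableAt_fun_id hf, deriv_id'']
  ring

section Polynomial

variable (α c : ℝ)

lemma hasDerivAt_pow_add_sq (k : ℕ) (t : ℝ) :
    HasDerivAt (fun t => α * t ^ k + t ^ 2 / 2 * c) (α * k * t ^ (k - 1) + t * c) t := by
  refine (((hasDerivAt_pow k t).const_mul α).fun_add
    (((hasDerivAt_pow 2 t).div_const 2).mul_const c)).congr_deriv ?_
  norm_num
  ring

lemma deriv_deriv_pow_add_sq {k : ℕ} (hk : 1 ≤ k) (t : ℝ) :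
    deriv (deriv fun t => α * t ^ k + t ^ 2 / 2 * c) t = α * k * (k - 1) * t ^ (k - 2) + c := by
  rw [funext fun t => (hasDerivAt_pow_add_sq α c k t).deriv]
  refine HasDerivAt.deriv ?_
  convert ((hasDerivAt_pow (k - 1) t).const_mul (α * k)).fun_add ((hasDerivAt_id' t).mul_const c)
    using 1
  rw [Nat.cast_sub hk, Nat.sub_sub]
  ring

lemma integral_deriv_pow_add_sq {k : ℕ} (hk : k ≠ 0) (t : ℝ) :
    ∫ u in (0 : ℝ)..t, (α * k * u ^ (k - 1) + u * c) = α * t ^ k + t ^ 2 / 2 * c := by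
  rw [integral_eq_sub_of_hasDerivAt (fun u _ => hasDerivAt_pow_add_sq α c k u)
    (Continuous.intervalIntegrable (by fun_prop) _ _)]
  simp [hk]

end Polynomial

/-- The zeroth moment `t₀ = x U'(x)` of the disk of radius `√x` for the profile
`U = A (log (x / a)) ^ p`. -/
noncomputable def diskMoment (a A p x : ℝ) : ℝ := A * p * log (x / a) ^ (p - 1)

section LogPowerProfile

variable {a A p x : ℝ} {U : ℝ → ℝ}

lemma continuousOn_diskMoment (ha : a ≠ 0) (hp : 1 ≤ p) :
    ContinuousOn (diskMoment a A p) (Ioi 0) :=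
  continuousOn_const.mul (continuousOn_rpow_log_div ha (sub_nonneg.2 hp))

lemma diskMoment_self (ha : a ≠ 0) (hp : p ≠ 1) : diskMoment a A p a = 0 := by
  simp [diskMoment, div_self ha, zero_rpow (sub_ne_zero.2 hp)]

lemma hasDerivAt_diskMoment (ha : 0 < a) (hx : a < x) :
    HasDerivAt (diskMoment a A p) (A * p * (p - 1) * log (x / a) ^ (p - 2) / x) x := by
  refine ((hasDerivAt_rpow_log_div ha hx (p - 1)).const_mul (A * p)).congr_deriv ?_
  rw [sub_sub, one_add_one_eq_two]
  ring

lemma hasDerivAt_of_eq_rpow_log (ha : 0 < a) (hU : ∀ y, a ≤ y → U y = A * log (y / a) ^ p)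
    (hx : a < x) : HasDerivAt U (diskMoment a A p x / x) x := by
  refine (((hasDerivAt_rpow_log_div ha hx p).const_mul A).congr_of_eventuallyEq ?_).congr_deriv ?_
  · filter_upwards [eventually_gt_nhds hx] with y hy using hU y hy.le
  · rw [diskMoment]
    ring

lemma deriv_eventuallyEq_diskMoment_div (ha : 0 < a)
    (hU : ∀ y, a ≤ y → U y = A * log (y / a) ^ p) (hx : a < x) :
    deriv U =ᶠ[𝓝 x] fun y => diskMoment a A p y / y := by
  filter_upwards [eventually_gt_nhds hx] with y hy using (hasDerivAt_of_eq_rpow_log ha hU hy).deriv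

lemma mul_deriv_eventuallyEq_diskMoment (ha : 0 < a)
    (hU : ∀ y, a ≤ y → U y = A * log (y / a) ^ p) (hx : a < x) :
    (fun y => y * deriv U y) =ᶠ[𝓝 x] diskMoment a A p := by
  filter_upwards [deriv_eventuallyEq_diskMoment_div ha hU hx, eventually_gt_nhds (ha.trans hx)]
    with y hy hy0
  rw [hy, mul_div_cancel₀ _ hy0.ne']

lemma mul_deriv_deriv_add_deriv_eq (ha : 0 < a) (hU : ∀ y, a ≤ y → U y = A * log (y / a) ^ p)
    (hx : a < x) :
    x * deriv (deriv U) x + deriv U x = A * p * (p - 1) * log (x / a) ^ (p - 2) / x := by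
  have hdiff : DifferentiableAt ℝ (deriv U) x :=
    ((hasDerivAt_diskMoment ha hx).differentiableAt.div differentiableAt_id
      (ha.trans hx).ne').congr_of_eventuallyEq (deriv_eventuallyEq_diskMoment_div ha hU hx)
  rw [mul_deriv_deriv_add_deriv hdiff, (mul_deriv_eventuallyEq_diskMoment ha hU hx).deriv_eq,
    (hasDerivAt_diskMoment ha hx).deriv]

lemma tendsto_deriv_nhdsGT_zero (ha : 0 < a) (hp : 1 < p)
    (hU : ∀ y, a ≤ y → U y = A * log (y / a) ^ p) : Tendsto (deriv U) (𝓝[>] a) (𝓝 0) := by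
  have hcont : ContinuousAt (fun y => diskMoment a A p y / y) a :=
    ((continuousOn_diskMoment ha.ne' hp.le).continuousAt (Ioi_mem_nhds ha)).div continuousAt_id
      ha.ne'
  have hlim : Tendsto (fun y => diskMoment a A p y / y) (𝓝[>] a) (𝓝 (diskMoment a A p a / a)) :=
    hcont.continuousWithinAt
  rw [diskMoment_self ha.ne' hp.ne', zero_div] at hlim
  refine hlim.congr' ?_
  filter_upwards [self_mem_nhdsWithin] with y hy
  exact (deriv_eventuallyEq_diskMoment_div ha hU hy).eq_of_nhds.symm

end LogPowerProfile

section Family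

variable {k : ℕ} {a b A p α x : ℝ} {U : ℝ → ℝ}

lemma diskMoment_pow_sub_two (hk : 2 ≤ k) (hpk : (p - 1) * ((k : ℝ) - 2) = 1) (ha : 0 < a)
    (hx : a ≤ x) : diskMoment a A p x ^ (k - 2) = (A * p) ^ (k - 2) * log (x / a) := by
  rw [diskMoment, mul_pow, ← rpow_mul_natCast (log_nonneg ((one_le_div ha).2 hx)),
    Nat.cast_sub hk, Nat.cast_ofNat, hpk, rpow_one]

lemma log_eq_of_diskMoment (hk : 2 ≤ k) (hpk : (p - 1) * ((k : ℝ) - 2) = 1) (ha : 0 < a)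
    (hx : a ≤ x) (hα : α * k * (k - 1) * (A * p) ^ (k - 2) = 1) :
    α * k * (k - 1) * diskMoment a A p x ^ (k - 2) + log a = log x := by
  rw [diskMoment_pow_sub_two hk hpk ha hx, ← mul_assoc, hα, one_mul,
    log_div (ha.trans_le hx).ne' ha.ne']
  ring

lemma mul_deriv_mul_log_sub_eq (hk : 2 ≤ k) (hpk : (p - 1) * ((k : ℝ) - 2) = 1) (ha : 0 < a)
    (hU : ∀ y, a ≤ y → U y = A * log (y / a) ^ p) (hx : a < x)
    (hα : α * k * (k - 1) * (A * p) ^ (k - 2) = 1) :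
    x * deriv U x * log x - U x =
      α * k * diskMoment a A p x ^ (k - 1) + diskMoment a A p x * log a := by
  have hL : 0 ≤ log (x / a) := log_nonneg ((one_le_div ha).2 hx.le)
  have hp : p - 1 + 1 ≠ 0 := by
    have : (2 : ℝ) ≤ k := by exact_mod_cast hk
    rw [sub_add_cancel]
    rintro rfl
    linarith
  have hTL : diskMoment a A p x * log (x / a) = A * p * log (x / a) ^ p := by
    rw [diskMoment, mul_assoc, ← rpow_add_one' hL hp, sub_add_cancel]
  have hTpow : diskMoment a A p x ^ (k - 1) =
      (A * p) ^ (k - 2) * log (x / a) * diskMoment a A p x := by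
    rw [← diskMoment_pow_sub_two hk hpk ha hx.le, ← pow_succ]
    congr 1
    omega
  rw [(mul_deriv_eventuallyEq_diskMoment ha hU hx).eq_of_nhds, hU x hx.le,
    ← log_eq_of_diskMoment hk hpk ha hx.le hα, hTpow, diskMoment_pow_sub_two hk hpk ha hx.le]
  linear_combination (α * k * (k - 2) * (A * p) ^ (k - 2)) * hTL +
    A * log (x / a) ^ p * (α * k * (A * p) ^ (k - 2)) * hpk + A * log (x / a) ^ p * hα

lemma integral_mul_log_sub_mul_sigma_eq (hk : 2 ≤ k) (hpk : (p - 1) * ((k : ℝ) - 2) = 1)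
    (hp : 1 < p) (ha : 0 < a) (hA : 0 ≤ A) (hU : ∀ y, a ≤ y → U y = A * log (y / a) ^ p)
    (hb : a < b) (hα : α * k * (k - 1) * (A * p) ^ (k - 2) = 1) :
    ∫ x in a..b, (x * deriv U x * log x - U x) * (x * deriv (deriv U) x + deriv U x) =
      α * diskMoment a A p b ^ k + diskMoment a A p b ^ 2 / 2 * log a := by
  have hpos : ∀ x ∈ uIcc a b, 0 < x := fun x hx => by
    rw [uIcc_of_le hb.le] at hx
    exact ha.trans_le hx.1
  have hgt : ∀ x ∈ Ioo (min a b) (max a b), a < x := fun x hx => by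
    rw [min_eq_left hb.le] at hx
    exact hx.1
  have hσ : ∀ x ∈ Ioo (min a b) (max a b), 0 ≤ A * p * (p - 1) * log (x / a) ^ (p - 2) / x :=
    fun x hx => div_nonneg (mul_nonneg (mul_nonneg (mul_nonneg hA (by linarith)) (by linarith))
      (rpow_nonneg (log_nonneg ((one_le_div ha).2 (hgt x hx).le)) _)) (ha.trans (hgt x hx)).le
  calc _ = ∫ x in a..b, (fun u => α * k * u ^ (k - 1) + u * log a) (diskMoment a A p x) *
        (A * p * (p - 1) * log (x / a) ^ (p - 2) / x) := by
        refine integral_congr_ae (Eventually.of_forall fun x hx => ?_)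
        rw [uIoc_of_le hb.le] at hx
        rw [mul_deriv_mul_log_sub_eq hk hpk ha hU hx.1 hα, mul_deriv_deriv_add_deriv_eq ha hU hx.1]
    _ = ∫ u in diskMoment a A p a..diskMoment a A p b, (α * k * u ^ (k - 1) + u * log a) :=
        integral_comp_mul_deriv_of_deriv_nonneg (g := fun u => α * k * u ^ (k - 1) + u * log a)
          ((continuousOn_diskMoment ha.ne' hp.le).mono hpos)
          (fun x hx => hasDerivAt_diskMoment ha (hgt x hx)) hσ
    _ = _ := by rw [diskMoment_self ha.ne' hp.ne', integral_deriv_pow_add_sq _ _ (by omega)]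

end Family

lemma leading_coeff_mul_pow_eq_one {k : ℕ} {A C Rk ak : ℝ} (hk : 2 < k) (hC : C ≠ 0)
    (hRk : Rk = ((k : ℝ) - 1) * C ^ (k - 1))
    (hak : ak = 1 / (k : ℝ) * ((k : ℝ) - 2) ^ (k - 2) / ((k : ℝ) - 1) ^ (k - 1))
    (hA : A ^ (k - 2) = C ^ (k - 1)) :
    ((k : ℝ) - 1) * ak / Rk * k * (k - 1) * (A * (((k : ℝ) - 1) / ((k : ℝ) - 2))) ^ (k - 2) = 1 := by
  have hk2 : (2 : ℝ) < k := by exact_mod_cast hk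
  have hk1 : ((k : ℝ) - 1) ^ (k - 1) = ((k : ℝ) - 1) ^ (k - 2) * ((k : ℝ) - 1) := by
    rw [← pow_succ]
    congr 1
    omega
  have : (k : ℝ) - 1 ≠ 0 := by linarith
  have : (k : ℝ) - 2 ≠ 0 := by linarith
  rw [hRk, hak, mul_pow, hA, div_pow, hk1]
  field_simp

/-- For the general family `U_k(x) = (R_k/(k−1))^{1/(k−2)}
(log(x/r₀²))^{(k−1)/(k−2)}` with `R_k = (k−1) C₁^{k−1}`,
`a_k = (1/k)(k−2)^{k−2}/(k−1)^{k−1}`: `U_k(r₀²) = 0`, `U_k'(x) → 0` as `x → r₀²⁺`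
(so `u₀ = 0`), and with `σ(x) = x U_k''(x) + U_k'(x)`, `t₀ = r² U_k'(r²)`,
`∫_{r₀²}^{r²} (x U_k'(x) log x − U_k(x)) σ(x) dx = ((k−1) a_k/R_k) t₀^k +
(t₀²/2) log(r₀²)`; moreover the second derivative of the right-hand side in `t₀`
equals `log(r²)`. -/
theorem tau_general_family (k : ℕ) (hk : 2 < k) (C₁ r₀ r : ℝ) (hC₁ : 0 < C₁)
    (h₀ : 0 < r₀) (hr : r₀ < r) (Rk ak : ℝ)
    (hRk : Rk = ((k : ℝ) - 1) * C₁ ^ (k - 1))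
    (hak : ak = 1 / (k : ℝ) * ((k : ℝ) - 2) ^ (k - 2) / ((k : ℝ) - 1) ^ (k - 1))
    (U : ℝ → ℝ)
    (hU : ∀ x : ℝ, r₀ ^ 2 ≤ x →
      U x = (Rk / ((k : ℝ) - 1)) ^ (1 / ((k : ℝ) - 2)) *
        Real.log (x / r₀ ^ 2) ^ (((k : ℝ) - 1) / ((k : ℝ) - 2)))
    (t₀ : ℝ) (ht₀ : t₀ = r ^ 2 * deriv U (r ^ 2)) :
    U (r₀ ^ 2) = 0 ∧
    Filter.Tendsto (deriv U) (nhdsWithin (r₀ ^ 2) (Set.Ioi (r₀ ^ 2))) (nhds 0) ∧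
    (∫ x in (r₀ ^ 2)..(r ^ 2),
        (x * deriv U x * Real.log x - U x) * (x * deriv (deriv U) x + deriv U x)) =
      ((k : ℝ) - 1) * ak / Rk * t₀ ^ k + t₀ ^ 2 / 2 * Real.log (r₀ ^ 2) ∧
    deriv (deriv (fun t : ℝ =>
        ((k : ℝ) - 1) * ak / Rk * t ^ k + t ^ 2 / 2 * Real.log (r₀ ^ 2))) t₀ =
      Real.log (r ^ 2) := by
  have hk2 : (2 : ℝ) < k := by exact_mod_cast hk
  have hC : Rk / ((k : ℝ) - 1) = C₁ ^ (k - 1) := by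
    rw [hRk, mul_div_cancel_left₀ _ (by linarith)]
  have hA : ((Rk / ((k : ℝ) - 1)) ^ (1 / ((k : ℝ) - 2))) ^ (k - 2) = C₁ ^ (k - 1) := by
    rw [hC, rpow_one_div_sub_two_pow (by positivity) hk]
  have hA0 : 0 ≤ (Rk / ((k : ℝ) - 1)) ^ (1 / ((k : ℝ) - 2)) := rpow_nonneg (hC ▸ by positivity) _
  have hp : 1 < ((k : ℝ) - 1) / ((k : ℝ) - 2) := by
    rw [one_lt_div (by linarith)]
    linarith
  have hpk : (((k : ℝ) - 1) / ((k : ℝ) - 2) - 1) * ((k : ℝ) - 2) = 1 := by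
    field_simp [(by linarith : (k : ℝ) - 2 ≠ 0)]
    ring
  have hα := leading_coeff_mul_pow_eq_one hk hC₁.ne' hRk hak hA
  have ha : 0 < r₀ ^ 2 := by positivity
  have hb : r₀ ^ 2 < r ^ 2 := pow_lt_pow_left₀ hr h₀.le two_ne_zero
  have ht : t₀ = diskMoment _ _ _ (r ^ 2) :=
    ht₀.trans (mul_deriv_eventuallyEq_diskMoment ha hU hb).eq_of_nhds
  refine ⟨?_, tendsto_deriv_nhdsGT_zero ha hp hU, ?_, ?_⟩
  · rw [hU _ le_rfl, div_self ha.ne', log_one, zero_rpow (by positivity), mul_zero]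
  · rw [ht, integral_mul_log_sub_mul_sigma_eq hk.le hpk hp ha hA0 hU hb hα]
  · rw [deriv_deriv_pow_add_sq _ _ (by omega), ht, log_eq_of_diskMoment hk.le hpk ha hb.le hα]
end
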